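/- arXiv:1606.02790 — 2 statements merged into one kernel-verified Lean document; each statement's English description precedes it below -/
import Mathlib

section
/- There exists an absolute constant c > 0 such that for every measurable vector field v : Q(1) → ℝ³ with v ∈ L³(Q(1)), every 0 < r ≤ 1 and every 0 < θ ≤ 1, one has C(θr) ≤ c ( θ C(r) + θ^{−2} C̃(r) ). -/
/- Setting: suitable weak solutions of the 3D incompressible Navier–Stokes equations,
   following Caffarelli–Kohn–Nirenberg.  The velocity field is `v`, its weak spatial
   gradient is `dv`, the pressure is `p` and the force is `f`. -/

open MeasureTheory Filter Metric Set Bornology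
open scoped Topology ENNReal

noncomputable section

/-- Three dimensional Euclidean space. -/
abbrev V3 : Type := EuclideanSpace ℝ (Fin 3)

/-- The standard basis of `V3`. -/
def e3 (i : Fin 3) : V3 := EuclideanSpace.single i 1

/-- Euclidean dot product. -/
def dot3 (a b : V3) : ℝ := ∑ i, a i * b i

/-- Squared Frobenius norm of a (gradient) matrix. -/
def fnormSq (A : V3 →L[ℝ] V3) : ℝ := ∑ i, ‖A (e3 i)‖ ^ 2

/-- Frobenius norm of a (gradient) matrix. -/
def fnorm (A : V3 →L[ℝ] V3) : ℝ := Real.sqrt (fnormSq A)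

/-- Frobenius inner product of two (gradient) matrices. -/
def fdot (A B : V3 →L[ℝ] V3) : ℝ := ∑ i, dot3 (A (e3 i)) (B (e3 i))

/-- Laplacian of a scalar function on `V3`. -/
def lap3 (φ : V3 → ℝ) (x : V3) : ℝ :=
  ∑ i, fderiv ℝ (fun y => fderiv ℝ φ y (e3 i)) x (e3 i)

/-- Smooth compactly supported scalar test function on a spatial domain. -/
def IsSpaceTest (U : Set V3) (φ : V3 → ℝ) : Prop :=
  ContDiff ℝ (⊤ : ℕ∞) φ ∧ HasCompactSupport φ ∧ tsupport φ ⊆ U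

/-- Smooth compactly supported scalar test function on a space-time domain. -/
def IsTimeSpaceTest (U : Set V3) (I : Set ℝ) (φ : V3 → ℝ → ℝ) : Prop :=
  ContDiff ℝ (⊤ : ℕ∞) (fun z : V3 × ℝ => φ z.1 z.2) ∧
  HasCompactSupport (fun z : V3 × ℝ => φ z.1 z.2) ∧
  tsupport (fun z : V3 × ℝ => φ z.1 z.2) ⊆ U ×ˢ I

/-- Smooth compactly supported vector test field on a space-time domain. -/
def IsVectorTest (U : Set V3) (I : Set ℝ) (ψ : V3 → ℝ → V3) : Prop :=
  ContDiff ℝ (⊤ : ℕ∞) (fun z : V3 × ℝ => ψ z.1 z.2) ∧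
  HasCompactSupport (fun z : V3 × ℝ => ψ z.1 z.2) ∧
  tsupport (fun z : V3 × ℝ => ψ z.1 z.2) ⊆ U ×ˢ I

/-- `Ω` has a `C²` boundary: near every boundary point, `Ω` is the sublevel set of a
`C²` function with nonvanishing gradient. -/
def HasC2Boundary (Ω : Set V3) : Prop :=
  ∀ x ∈ frontier Ω, ∃ (U : Set V3) (g : V3 → ℝ), IsOpen U ∧ x ∈ U ∧
    ContDiff ℝ 2 g ∧ (∀ y ∈ U, fderiv ℝ g y ≠ 0) ∧ Ω ∩ U = {y ∈ U | g y < 0}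

/-- `dv` is the weak spatial gradient of `v` on `U × I`. -/
def IsWeakSpatialGradient (U : Set V3) (I : Set ℝ) (v : V3 → ℝ → V3)
    (dv : V3 → ℝ → V3 →L[ℝ] V3) : Prop :=
  ∀ᵐ t ∂(volume.restrict I), ∀ φ : V3 → ℝ, IsSpaceTest U φ → ∀ u : V3,
    (∫ x in U, φ x • dv x t u) = - ∫ x in U, fderiv ℝ φ x u • v x t

/-- `(v, p)` is a suitable weak solution of the Navier–Stokes system with force `f` on
`Ω × (a, b)`, where `Ω ⊆ ℝ³` is a bounded `C²` domain; `dv` denotes the weak spatial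
gradient of `v`. -/
structure IsSuitableWeakSolution (Ω : Set V3) (a b : ℝ) (v : V3 → ℝ → V3)
    (dv : V3 → ℝ → V3 →L[ℝ] V3) (p : V3 → ℝ → ℝ) (f : V3 → ℝ → V3) : Prop where
  open_dom : IsOpen Ω
  bounded_dom : IsBounded Ω
  nonempty_dom : Ω.Nonempty
  c2_boundary : HasC2Boundary Ω
  time_lt : a < b
  meas_v : AEMeasurable (fun z : V3 × ℝ => v z.1 z.2) (volume.restrict (Ω ×ˢ Ioo a b))
  meas_dv : AEMeasurable (fun z : V3 × ℝ => dv z.1 z.2) (volume.restrict (Ω ×ˢ Ioo a b))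
  meas_p : AEMeasurable (fun z : V3 × ℝ => p z.1 z.2) (volume.restrict (Ω ×ˢ Ioo a b))
  meas_f : AEMeasurable (fun z : V3 × ℝ => f z.1 z.2) (volume.restrict (Ω ×ˢ Ioo a b))
  /-- `v ∈ L^∞(a,b; L²(Ω))`. -/
  v_linf_l2 : ∃ K : ℝ, ∀ᵐ t ∂(volume.restrict (Ioo a b)),
    IntegrableOn (fun x => ‖v x t‖ ^ 2) Ω volume ∧ (∫ x in Ω, ‖v x t‖ ^ 2) ≤ K
  /-- `∇v ∈ L²(Ω × (a,b))`. -/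
  dv_l2 : IntegrableOn (fun z : V3 × ℝ => fnormSq (dv z.1 z.2)) (Ω ×ˢ Ioo a b) volume
  /-- `p ∈ L^{3/2}(Ω × (a,b))`. -/
  p_l32 : IntegrableOn (fun z : V3 × ℝ => |p z.1 z.2| ^ ((3:ℝ)/2)) (Ω ×ˢ Ioo a b) volume
  /-- `f ∈ L^m(Ω × (a,b))` for some `m > 5/2`. -/
  f_lm : ∃ m : ℝ, 5/2 < m ∧
    IntegrableOn (fun z : V3 × ℝ => ‖f z.1 z.2‖ ^ m) (Ω ×ˢ Ioo a b) volume
  /-- `dv` is the weak spatial gradient of `v`. -/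
  weak_gradient : IsWeakSpatialGradient Ω (Ioo a b) v dv
  /-- `v` is divergence free in the sense of distributions. -/
  div_free : ∀ᵐ t ∂(volume.restrict (Ioo a b)), ∀ φ : V3 → ℝ, IsSpaceTest Ω φ →
    (∫ x in Ω, fderiv ℝ φ x (v x t)) = 0
  /-- The Navier–Stokes equations hold in the sense of distributions. -/
  nse : ∀ ψ : V3 → ℝ → V3, IsVectorTest Ω (Ioo a b) ψ →
    (∫ t in Ioo a b, ∫ x in Ω,
      (dot3 (v x t) (deriv (fun s => ψ x s) t)
        - fdot (dv x t) (fderiv ℝ (fun y => ψ y t) x)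
        - dot3 (dv x t (v x t)) (ψ x t)
        + p x t * (∑ i, fderiv ℝ (fun y => ψ y t) x (e3 i) i)
        + dot3 (f x t) (ψ x t))) = 0
  /-- The generalized local energy inequality. -/
  energy : ∀ᵐ t ∂(volume.restrict (Ioo a b)), ∀ φ : V3 → ℝ → ℝ,
    IsTimeSpaceTest Ω (Ioo a b) φ → (∀ x s, 0 ≤ φ x s) →
    (∫ x in Ω, ‖v x t‖ ^ 2 * φ x t)
        + 2 * ∫ s in Ioo a t, ∫ x in Ω, fnormSq (dv x s) * φ x s
      ≤ (∫ s in Ioo a t, ∫ x in Ω,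
            ‖v x s‖ ^ 2 * (deriv (fun τ => φ x τ) s + lap3 (fun y => φ y s) x))
        + (∫ s in Ioo a t, ∫ x in Ω, ‖v x s‖ ^ 2 * fderiv ℝ (fun y => φ y s) x (v x s))
        + 2 * (∫ s in Ioo a t, ∫ x in Ω, p x s * fderiv ℝ (fun y => φ y s) x (v x s))
        + 2 * (∫ s in Ioo a t, ∫ x in Ω, dot3 (f x s) (v x s) * φ x s)

/-- `E_q(z,r) = r^{-5+2q} ∬_{Q(z,r)} |∇v|^q`, centered at `z = (x₀,t₀)`. -/
def funEq (dv : V3 → ℝ → V3 →L[ℝ] V3) (q : ℝ) (z : V3 × ℝ) (r : ℝ) : ℝ :=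
  r ^ (2 * q - 5) * ∫ t in Ioo (z.2 - r ^ 2) z.2, ∫ x in ball z.1 r, fnorm (dv x t) ^ q

/-- `E(z,r) = r⁻¹ ∬_{Q(z,r)} |∇v|²`, centered at `z = (x₀,t₀)`. -/
def funE2 (dv : V3 → ℝ → V3 →L[ℝ] V3) (z : V3 × ℝ) (r : ℝ) : ℝ :=
  r⁻¹ * ∫ t in Ioo (z.2 - r ^ 2) z.2, ∫ x in ball z.1 r, fnormSq (dv x t)

/-- `z` is a regular point of `v`: `v` is essentially bounded on some parabolic
cylinder `Q(z,ρ)`. -/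
def RegularPoint (v : V3 → ℝ → V3) (z : V3 × ℝ) : Prop :=
  ∃ ρ : ℝ, 0 < ρ ∧ ∃ K : ℝ,
    ∀ᵐ w : V3 × ℝ ∂(volume.restrict (ball z.1 ρ ×ˢ Ioo (z.2 - ρ ^ 2) z.2)),
      ‖v w.1 w.2‖ ≤ K

/- Scaled functionals centered at the reference point `z = (0,0)`. -/

/-- `A(r) = r⁻¹ sup_{-r²<s<0} ∫_{B(r)} |v|²`. -/
def funA (v : V3 → ℝ → V3) (r : ℝ) : ℝ :=
  r⁻¹ * sSup ((fun s => ∫ x in ball (0 : V3) r, ‖v x s‖ ^ 2) '' Ioo (-r ^ 2) 0)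

/-- `E(r) = r⁻¹ ∬_{Q(r)} |∇v|²`. -/
def funE (dv : V3 → ℝ → V3 →L[ℝ] V3) (r : ℝ) : ℝ :=
  r⁻¹ * ∫ t in Ioo (-r ^ 2) 0, ∫ x in ball (0 : V3) r, fnormSq (dv x t)

/-- `E_q(r) = r^{-5+2q} ∬_{Q(r)} |∇v|^q`. -/
def funEqz (dv : V3 → ℝ → V3 →L[ℝ] V3) (q r : ℝ) : ℝ :=
  r ^ (2 * q - 5) * ∫ t in Ioo (-r ^ 2) 0, ∫ x in ball (0 : V3) r, fnorm (dv x t) ^ q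

/-- `C(r) = r⁻² ∬_{Q(r)} |v|³`. -/
def funC (v : V3 → ℝ → V3) (r : ℝ) : ℝ :=
  r ^ (-2 : ℝ) * ∫ t in Ioo (-r ^ 2) 0, ∫ x in ball (0 : V3) r, ‖v x t‖ ^ 3

/-- `D(r) = r⁻² ∬_{Q(r)} |p - ⟨p⟩_{B(r)}|^{3/2}`. -/
def funD (p : V3 → ℝ → ℝ) (r : ℝ) : ℝ :=
  r ^ (-2 : ℝ) * ∫ t in Ioo (-r ^ 2) 0, ∫ x in ball (0 : V3) r,
    |p x t - ⨍ y in ball (0 : V3) r, p y t| ^ ((3:ℝ)/2)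

/-- `C̃(r) = r⁻² ∬_{Q(r)} |v - ⟨v⟩_{B(r)}|³`. -/
def funCt (v : V3 → ℝ → V3) (r : ℝ) : ℝ :=
  r ^ (-2 : ℝ) * ∫ t in Ioo (-r ^ 2) 0, ∫ x in ball (0 : V3) r,
    ‖v x t - ⨍ y in ball (0 : V3) r, v y t‖ ^ 3

/-- `G(r) = r⁻¹ ∫_{-r²}^0 (∫_{B(r)} |v|⁶)^{1/3}`. -/
def funG (v : V3 → ℝ → V3) (r : ℝ) : ℝ :=
  r⁻¹ * ∫ t in Ioo (-r ^ 2) 0, (∫ x in ball (0 : V3) r, ‖v x t‖ ^ 6) ^ ((1:ℝ)/3)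

/-- `P(r) = r⁻² inf_{c∈ℝ} ( ∫_{-r²}^0 (∫_{B(r)} |p - c|³)^{1/3} )²`. -/
def funP (p : V3 → ℝ → ℝ) (r : ℝ) : ℝ :=
  r ^ (-2 : ℝ) * ⨅ c : ℝ,
    (∫ t in Ioo (-r ^ 2) 0, (∫ x in ball (0 : V3) r, |p x t - c| ^ 3) ^ ((1:ℝ)/3)) ^ 2

/-- `F(r) = ( ∫_{-r²}^0 (∫_{B(r)} |f|²)^{2/3} )^{3/2}`. -/
def funF (f : V3 → ℝ → V3) (r : ℝ) : ℝ :=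
  (∫ t in Ioo (-r ^ 2) 0, (∫ x in ball (0 : V3) r, ‖f x t‖ ^ 2) ^ ((2:ℝ)/3)) ^ ((3:ℝ)/2)

private lemma cube_add_le (a b : ℝ) (ha : 0 ≤ a) (hb : 0 ≤ b) :
    (a + b) ^ 3 ≤ 4 * a ^ 3 + 4 * b ^ 3 := by
  nlinarith [sq_nonneg (a - b), mul_nonneg ha hb,
    mul_nonneg (mul_nonneg ha hb) (add_nonneg ha hb)]

private lemma norm_le_one_add_cube (a : ℝ) (ha : 0 ≤ a) : a ≤ 1 + a ^ 3 := by
  rcases le_total a 1 with h | h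
  · nlinarith [pow_nonneg ha 3]
  · nlinarith [mul_nonneg ha (sq_nonneg (a - 1)), mul_nonneg ha (sub_nonneg.2 h)]

private lemma int_of_cube {μ : Measure V3} [IsFiniteMeasure μ] {f : V3 → V3}
    (hm : AEStronglyMeasurable f μ) (hi : Integrable (fun x => ‖f x‖ ^ 3) μ) :
    Integrable f μ := by
  refine ((integrable_const (1:ℝ)).add hi).mono' hm ?_
  filter_upwards with x
  simpa using norm_le_one_add_cube ‖f x‖ (norm_nonneg _)

private lemma vol_ball_pos (r : ℝ) (hr : 0 < r) : 0 < (volume (ball (0:V3) r)).toReal := by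
  have h1 : volume (ball (0:V3) r) ≠ 0 := (measure_ball_pos volume 0 hr).ne'
  have h2 : volume (ball (0:V3) r) ≠ ⊤ := measure_ball_lt_top.ne
  exact ENNReal.toReal_pos h1 h2

private lemma vol_ball_scale {r θ : ℝ} (hθ : 0 ≤ θ) :
    (volume (ball (0:V3) (θ * r))).toReal = θ ^ 3 * (volume (ball (0:V3) r)).toReal := by
  rw [Measure.addHaar_ball_mul volume (0:V3) hθ r, finrank_euclideanSpace_fin,
    ENNReal.toReal_mul, ENNReal.toReal_ofReal (pow_nonneg hθ 3)]

private lemma jensen_ball {r : ℝ} (hr : 0 < r) (f : V3 → V3)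
    (hm : AEStronglyMeasurable f (volume.restrict (ball (0:V3) r)))
    (hi : IntegrableOn (fun x => ‖f x‖ ^ 3) (ball (0:V3) r) volume) :
    (volume (ball (0:V3) r)).toReal * ‖⨍ y in ball (0:V3) r, f y‖ ^ 3
      ≤ ∫ x in ball (0:V3) r, ‖f x‖ ^ 3 := by
  set μ := volume.restrict (ball (0:V3) r) with hμ
  haveI : IsFiniteMeasure μ := ⟨by
    rw [hμ, Measure.restrict_apply_univ]; exact measure_ball_lt_top⟩
  haveI : NeZero μ := ⟨by
    intro h
    have := (measure_ball_pos volume (0:V3) hr).ne'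
    rw [← Measure.restrict_apply_univ (ball (0:V3) r), ← hμ, h] at this
    simp at this⟩
  have hint : Integrable f μ := int_of_cube hm hi
  have hnorm : ‖⨍ y, f y ∂μ‖ ≤ ⨍ y, ‖f y‖ ∂μ := by
    rw [average_eq, average_eq, norm_smul, norm_inv, Real.norm_eq_abs,
      abs_of_nonneg measureReal_nonneg, smul_eq_mul]
    exact mul_le_mul_of_nonneg_left (norm_integral_le_integral_norm f) (by positivity)
  have hjensen : (⨍ y, ‖f y‖ ∂μ) ^ 3 ≤ ⨍ y, ‖f y‖ ^ 3 ∂μ := by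
    have := (convexOn_pow 3).map_average_le (by fun_prop) isClosed_Ici
      (Eventually.of_forall fun x => norm_nonneg (f x)) hint.norm hi
    simpa using this
  have hvol : 0 < (μ univ).toReal := by
    rw [hμ, Measure.restrict_apply_univ]; exact vol_ball_pos r hr
  have hv : (volume (ball (0:V3) r)).toReal = (μ univ).toReal := by
    rw [hμ, Measure.restrict_apply_univ]
  rw [hv]
  calc (μ univ).toReal * ‖⨍ y, f y ∂μ‖ ^ 3
      ≤ (μ univ).toReal * ⨍ y, ‖f y‖ ^ 3 ∂μ := by
        apply mul_le_mul_of_nonneg_left _ ENNReal.toReal_nonneg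
        exact le_trans (pow_le_pow_left₀ (norm_nonneg _) hnorm 3) hjensen
    _ = ∫ y, ‖f y‖ ^ 3 ∂μ := by
        rw [average_eq, smul_eq_mul, ← mul_assoc, measureReal_def, mul_inv_cancel₀ hvol.ne', one_mul]

private lemma finite_ball (r : ℝ) : IsFiniteMeasure (volume.restrict (ball (0:V3) r)) :=
  ⟨by rw [Measure.restrict_apply_univ]; exact measure_ball_lt_top⟩

private lemma diff_cube_integrable {r : ℝ} (f : V3 → V3) (m : V3)
    (hm : AEStronglyMeasurable f (volume.restrict (ball (0:V3) r)))
    (hi : IntegrableOn (fun x => ‖f x‖ ^ 3) (ball (0:V3) r) volume) :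
    IntegrableOn (fun x => ‖f x - m‖ ^ 3) (ball (0:V3) r) volume := by
  haveI := finite_ball r
  have hms : AEStronglyMeasurable (fun x => ‖f x - m‖ ^ 3)
      (volume.restrict (ball (0:V3) r)) :=
    (continuous_pow 3).comp_aestronglyMeasurable (hm.sub aestronglyMeasurable_const).norm
  refine ((hi.const_mul 4).add (integrable_const (4 * ‖m‖ ^ 3))).mono' hms ?_
  filter_upwards with x
  rw [Real.norm_eq_abs, abs_of_nonneg (by positivity)]
  calc ‖f x - m‖ ^ 3 ≤ (‖f x‖ + ‖m‖) ^ 3 :=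
        pow_le_pow_left₀ (norm_nonneg _) (norm_sub_le _ _) 3
    _ ≤ 4 * ‖f x‖ ^ 3 + 4 * ‖m‖ ^ 3 := cube_add_le _ _ (norm_nonneg _) (norm_nonneg _)

private lemma diff_est {r : ℝ} (hr : 0 < r) (f : V3 → V3)
    (hm : AEStronglyMeasurable f (volume.restrict (ball (0:V3) r)))
    (hi : IntegrableOn (fun x => ‖f x‖ ^ 3) (ball (0:V3) r) volume) :
    (∫ x in ball (0:V3) r, ‖f x - ⨍ y in ball (0:V3) r, f y‖ ^ 3)
      ≤ 8 * ∫ x in ball (0:V3) r, ‖f x‖ ^ 3 := by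
  haveI := finite_ball r
  set m := ⨍ y in ball (0:V3) r, f y with hm'
  have hdi := diff_cube_integrable f m hm hi
  have h1 : (∫ x in ball (0:V3) r, ‖f x - m‖ ^ 3)
      ≤ ∫ x in ball (0:V3) r, (4 * ‖f x‖ ^ 3 + 4 * ‖m‖ ^ 3) := by
    refine integral_mono_ae hdi ((hi.const_mul 4).add (integrable_const _)) ?_
    filter_upwards with x
    calc ‖f x - m‖ ^ 3 ≤ (‖f x‖ + ‖m‖) ^ 3 :=
          pow_le_pow_left₀ (norm_nonneg _) (norm_sub_le _ _) 3
      _ ≤ 4 * ‖f x‖ ^ 3 + 4 * ‖m‖ ^ 3 := cube_add_le _ _ (norm_nonneg _) (norm_nonneg _)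
  have h2 : (∫ x in ball (0:V3) r, (4 * ‖f x‖ ^ 3 + 4 * ‖m‖ ^ 3))
      = 4 * (∫ x in ball (0:V3) r, ‖f x‖ ^ 3)
        + 4 * ((volume (ball (0:V3) r)).toReal * ‖m‖ ^ 3) := by
    rw [integral_add (hi.const_mul 4) (integrable_const _), integral_const_mul,
      setIntegral_const, smul_eq_mul, measureReal_def]
    ring
  have h3 := jensen_ball hr f hm hi
  calc (∫ x in ball (0:V3) r, ‖f x - m‖ ^ 3)
      ≤ 4 * (∫ x in ball (0:V3) r, ‖f x‖ ^ 3)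
        + 4 * ((volume (ball (0:V3) r)).toReal * ‖m‖ ^ 3) := by rw [← h2]; exact h1
    _ ≤ 4 * (∫ x in ball (0:V3) r, ‖f x‖ ^ 3)
        + 4 * (∫ x in ball (0:V3) r, ‖f x‖ ^ 3) := by gcongr
    _ = 8 * ∫ x in ball (0:V3) r, ‖f x‖ ^ 3 := by ring

private lemma space_est {r θ : ℝ} (hr : 0 < r) (hθ : 0 < θ) (hθ1 : θ ≤ 1) (f : V3 → V3)
    (hm : AEStronglyMeasurable f (volume.restrict (ball (0:V3) r)))
    (hi : IntegrableOn (fun x => ‖f x‖ ^ 3) (ball (0:V3) r) volume) :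
    (∫ x in ball (0:V3) (θ * r), ‖f x‖ ^ 3)
      ≤ 4 * (∫ x in ball (0:V3) r, ‖f x - ⨍ y in ball (0:V3) r, f y‖ ^ 3)
        + 4 * θ ^ 3 * ∫ x in ball (0:V3) r, ‖f x‖ ^ 3 := by
  haveI := finite_ball r
  haveI := finite_ball (θ * r)
  set m := ⨍ y in ball (0:V3) r, f y with hm'
  have hsub : ball (0:V3) (θ * r) ⊆ ball (0:V3) r :=
    ball_subset_ball (by nlinarith)
  have hdi := diff_cube_integrable f m hm hi
  have h1 : (∫ x in ball (0:V3) (θ * r), ‖f x‖ ^ 3)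
      ≤ ∫ x in ball (0:V3) (θ * r), (4 * ‖f x - m‖ ^ 3 + 4 * ‖m‖ ^ 3) := by
    refine integral_mono_ae (hi.mono_set hsub)
      (((hdi.mono_set hsub).const_mul 4).add (integrable_const _)) ?_
    filter_upwards with x
    calc ‖f x‖ ^ 3 = ‖(f x - m) + m‖ ^ 3 := by rw [sub_add_cancel]
      _ ≤ (‖f x - m‖ + ‖m‖) ^ 3 :=
          pow_le_pow_left₀ (norm_nonneg _) (norm_add_le _ _) 3
      _ ≤ 4 * ‖f x - m‖ ^ 3 + 4 * ‖m‖ ^ 3 := cube_add_le _ _ (norm_nonneg _) (norm_nonneg _)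
  have h2 : (∫ x in ball (0:V3) (θ * r), (4 * ‖f x - m‖ ^ 3 + 4 * ‖m‖ ^ 3))
      = 4 * (∫ x in ball (0:V3) (θ * r), ‖f x - m‖ ^ 3)
        + 4 * ((volume (ball (0:V3) (θ * r))).toReal * ‖m‖ ^ 3) := by
    rw [integral_add ((hdi.mono_set hsub).const_mul 4) (integrable_const _),
      integral_const_mul, setIntegral_const, smul_eq_mul, measureReal_def]
    ring
  have h3 : (∫ x in ball (0:V3) (θ * r), ‖f x - m‖ ^ 3)
      ≤ ∫ x in ball (0:V3) r, ‖f x - m‖ ^ 3 :=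
    setIntegral_mono_set hdi (Eventually.of_forall fun x => by positivity)
      (HasSubset.Subset.eventuallyLE hsub)
  have h4 : (volume (ball (0:V3) (θ * r))).toReal * ‖m‖ ^ 3
      ≤ θ ^ 3 * ∫ x in ball (0:V3) r, ‖f x‖ ^ 3 := by
    rw [vol_ball_scale hθ.le, mul_assoc]
    exact mul_le_mul_of_nonneg_left (jensen_ball hr f hm hi) (by positivity)
  calc (∫ x in ball (0:V3) (θ * r), ‖f x‖ ^ 3)
      ≤ 4 * (∫ x in ball (0:V3) (θ * r), ‖f x - m‖ ^ 3)
        + 4 * ((volume (ball (0:V3) (θ * r))).toReal * ‖m‖ ^ 3) := by rw [← h2]; exact h1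
    _ ≤ 4 * (∫ x in ball (0:V3) r, ‖f x - m‖ ^ 3)
        + 4 * (θ ^ 3 * ∫ x in ball (0:V3) r, ‖f x‖ ^ 3) := by gcongr
    _ = 4 * (∫ x in ball (0:V3) r, ‖f x - m‖ ^ 3)
        + 4 * θ ^ 3 * ∫ x in ball (0:V3) r, ‖f x‖ ^ 3 := by ring

/-- interpolation for C. -/
theorem statement12 :
    ∃ c : ℝ, 0 < c ∧
      ∀ v : V3 → ℝ → V3,
        AEMeasurable (fun z : V3 × ℝ => v z.1 z.2)
          (volume.restrict (ball (0 : V3) 1 ×ˢ Ioo (-1 : ℝ) 0)) →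
        IntegrableOn (fun z : V3 × ℝ => ‖v z.1 z.2‖ ^ 3)
          (ball (0 : V3) 1 ×ˢ Ioo (-1 : ℝ) 0) volume →
        ∀ r θ : ℝ, 0 < r → r ≤ 1 → 0 < θ → θ ≤ 1 →
          funC v (θ*r) ≤ c * (θ * funC v r + θ ^ (-2 : ℝ) * funCt v r) := by
  refine ⟨4, by norm_num, ?_⟩
  intro v hmeas hint r θ hr hr1 hθ hθ1
  have hθr : 0 < θ * r := mul_pos hθ hr
  have hθr1 : θ * r ≤ 1 := by nlinarith
  -- product measure forms
  have hsm0 : AEStronglyMeasurable (fun z : V3 × ℝ => v z.1 z.2)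
      ((volume.restrict (ball (0:V3) 1)).prod (volume.restrict (Ioo (-1:ℝ) 0))) := by
    rw [Measure.prod_restrict, ← Measure.volume_eq_prod]
    exact hmeas.aestronglyMeasurable
  have hIv0 : Integrable (fun z : V3 × ℝ => ‖v z.1 z.2‖ ^ 3)
      ((volume.restrict (ball (0:V3) 1)).prod (volume.restrict (Ioo (-1:ℝ) 0))) := by
    rw [Measure.prod_restrict, ← Measure.volume_eq_prod]
    exact hint
  -- swapped versions
  have hsmS : AEStronglyMeasurable (fun z : ℝ × V3 => v z.2 z.1)
      ((volume.restrict (Ioo (-1:ℝ) 0)).prod (volume.restrict (ball (0:V3) 1))) :=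
    hsm0.prod_swap
  have hIvS : Integrable (fun z : ℝ × V3 => ‖v z.2 z.1‖ ^ 3)
      ((volume.restrict (Ioo (-1:ℝ) 0)).prod (volume.restrict (ball (0:V3) 1))) :=
    hIv0.swap
  have hIvS' : IntegrableOn (fun z : ℝ × V3 => ‖v z.2 z.1‖ ^ 3)
      (Ioo (-1:ℝ) 0 ×ˢ ball (0:V3) 1) volume := by
    rw [IntegrableOn, Measure.volume_eq_prod, ← Measure.prod_restrict]
    exact hIvS
  -- subset facts
  have hsub_t : Ioo (-r^2) (0:ℝ) ⊆ Ioo (-1:ℝ) 0 := fun x hx =>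
    ⟨by nlinarith [hx.1, hx.2], hx.2⟩
  have hθ2 : θ^2 ≤ 1 := by nlinarith
  have hsub_tt : Ioo (-(θ*r)^2) (0:ℝ) ⊆ Ioo (-r^2) 0 := fun x hx =>
    ⟨lt_of_le_of_lt (by nlinarith [sq_nonneg r]) hx.1, hx.2⟩
  -- a.e. good slices
  have hgood : ∀ᵐ t ∂(volume.restrict (Ioo (-1:ℝ) 0)),
      AEStronglyMeasurable (fun x => v x t) (volume.restrict (ball (0:V3) r)) ∧
      IntegrableOn (fun x => ‖v x t‖ ^ 3) (ball (0:V3) r) volume := by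
    filter_upwards [hsmS.prodMk_left, hIv0.prod_left_ae] with t h1 h2
    exact ⟨h1.mono_measure (Measure.restrict_mono (ball_subset_ball hr1) le_rfl),
      h2.mono_measure (Measure.restrict_mono (ball_subset_ball hr1) le_rfl)⟩
  have hgood_r : ∀ᵐ t ∂(volume.restrict (Ioo (-r^2) (0:ℝ))),
      AEStronglyMeasurable (fun x => v x t) (volume.restrict (ball (0:V3) r)) ∧
      IntegrableOn (fun x => ‖v x t‖ ^ 3) (ball (0:V3) r) volume :=
    ae_restrict_of_ae_restrict_of_subset hsub_t hgood
  -- integrability of t ↦ ∫ over ball s of ‖v‖³, for s ≤ 1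
  have hYint : ∀ s : ℝ, 0 < s → s ≤ 1 →
      Integrable (fun t => ∫ x in ball (0:V3) s, ‖v x t‖ ^ 3)
        (volume.restrict (Ioo (-s^2) (0:ℝ))) := by
    intro s hs hs1
    have h1 : IntegrableOn (fun z : ℝ × V3 => ‖v z.2 z.1‖ ^ 3)
        (Ioo (-s^2) (0:ℝ) ×ˢ ball (0:V3) s) volume := by
      refine hIvS'.mono_set (Set.prod_mono (fun x hx => ⟨by nlinarith [hx.1, hx.2], hx.2⟩)
        (ball_subset_ball hs1))
    rw [IntegrableOn, Measure.volume_eq_prod, ← Measure.prod_restrict] at h1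
    exact h1.integral_prod_left
  have hY := hYint r hr hr1
  have hYθ := hYint (θ*r) hθr hθr1
  -- measurability in t of the fluctuation integral
  have hle : (volume.restrict (Ioo (-r^2) (0:ℝ))).prod (volume.restrict (ball (0:V3) r))
      ≤ (volume.restrict (Ioo (-1:ℝ) 0)).prod (volume.restrict (ball (0:V3) 1)) := by
    rw [Measure.prod_restrict, Measure.prod_restrict]
    exact Measure.restrict_mono (Set.prod_mono hsub_t (ball_subset_ball hr1)) le_rfl
  have hvr : AEStronglyMeasurable (fun z : ℝ × V3 => v z.2 z.1)
      ((volume.restrict (Ioo (-r^2) (0:ℝ))).prod (volume.restrict (ball (0:V3) r))) :=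
    hsmS.mono_measure hle
  have hMm : AEStronglyMeasurable (fun t => ⨍ y in ball (0:V3) r, v y t)
      (volume.restrict (Ioo (-r^2) (0:ℝ))) := by
    have h1 : AEStronglyMeasurable (fun t => ∫ x in ball (0:V3) r, v x t)
        (volume.restrict (Ioo (-r^2) (0:ℝ))) := hvr.integral_prod_right'
    have h2 := h1.const_smul ((volume (ball (0:V3) r)).toReal⁻¹)
    simpa [setAverage_eq, measureReal_def, Pi.smul_def] using h2
  have hGm : AEStronglyMeasurable
      (fun t => ∫ x in ball (0:V3) r, ‖v x t - ⨍ y in ball (0:V3) r, v y t‖ ^ 3)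
      (volume.restrict (Ioo (-r^2) (0:ℝ))) := by
    have h1 : AEStronglyMeasurable
        (fun z : ℝ × V3 => ‖v z.2 z.1 - ⨍ y in ball (0:V3) r, v y z.1‖ ^ 3)
        ((volume.restrict (Ioo (-r^2) (0:ℝ))).prod (volume.restrict (ball (0:V3) r))) :=
      by
        have h0 : AEStronglyMeasurable (fun z : ℝ × V3 => v z.2 z.1 - ⨍ y in ball (0:V3) r, v y z.1)
            ((volume.restrict (Ioo (-r^2) (0:ℝ))).prod (volume.restrict (ball (0:V3) r))) :=
          hvr.sub (hMm.comp_fst (ν := volume.restrict (ball (0:V3) r)))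
        exact h0.norm.pow 3
    exact h1.integral_prod_right'
  -- integrability of the fluctuation integral
  have hX : Integrable
      (fun t => ∫ x in ball (0:V3) r, ‖v x t - ⨍ y in ball (0:V3) r, v y t‖ ^ 3)
      (volume.restrict (Ioo (-r^2) (0:ℝ))) := by
    refine (hY.const_mul 8).mono' hGm ?_
    filter_upwards [hgood_r] with t ht
    rw [Real.norm_eq_abs, abs_of_nonneg (integral_nonneg fun x => by positivity)]
    exact diff_est hr (fun x => v x t) ht.1 ht.2
  -- the main time-integrated estimate
  have hhint : Integrable
      (fun t => 4 * (∫ x in ball (0:V3) r, ‖v x t - ⨍ y in ball (0:V3) r, v y t‖ ^ 3)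
        + 4 * θ ^ 3 * ∫ x in ball (0:V3) r, ‖v x t‖ ^ 3)
      (volume.restrict (Ioo (-r^2) (0:ℝ))) :=
    (hX.const_mul 4).add (hY.const_mul (4 * θ ^ 3))
  have key : (∫ t in Ioo (-(θ*r)^2) (0:ℝ), ∫ x in ball (0:V3) (θ*r), ‖v x t‖ ^ 3)
      ≤ ∫ t in Ioo (-r^2) (0:ℝ),
          (4 * (∫ x in ball (0:V3) r, ‖v x t - ⨍ y in ball (0:V3) r, v y t‖ ^ 3)
            + 4 * θ ^ 3 * ∫ x in ball (0:V3) r, ‖v x t‖ ^ 3) := by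
    have step1 : (∫ t in Ioo (-(θ*r)^2) (0:ℝ), ∫ x in ball (0:V3) (θ*r), ‖v x t‖ ^ 3)
        ≤ ∫ t in Ioo (-(θ*r)^2) (0:ℝ),
            (4 * (∫ x in ball (0:V3) r, ‖v x t - ⨍ y in ball (0:V3) r, v y t‖ ^ 3)
              + 4 * θ ^ 3 * ∫ x in ball (0:V3) r, ‖v x t‖ ^ 3) := by
      refine integral_mono_ae hYθ (hhint.mono_measure (Measure.restrict_mono hsub_tt le_rfl)) ?_
      filter_upwards [ae_restrict_of_ae_restrict_of_subset hsub_tt hgood_r] with t ht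
      have := space_est hr hθ hθ1 (fun x => v x t) ht.1 ht.2
      simpa using this
    refine step1.trans (setIntegral_mono_set hhint ?_ (HasSubset.Subset.eventuallyLE hsub_tt))
    filter_upwards with t
    have h1 : (0:ℝ) ≤ ∫ x in ball (0:V3) r, ‖v x t - ⨍ y in ball (0:V3) r, v y t‖ ^ 3 :=
      integral_nonneg fun x => by positivity
    have h2 : (0:ℝ) ≤ ∫ x in ball (0:V3) r, ‖v x t‖ ^ 3 :=
      integral_nonneg fun x => by positivity
    positivity
  have hsplit : (∫ t in Ioo (-r^2) (0:ℝ),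
        (4 * (∫ x in ball (0:V3) r, ‖v x t - ⨍ y in ball (0:V3) r, v y t‖ ^ 3)
          + 4 * θ ^ 3 * ∫ x in ball (0:V3) r, ‖v x t‖ ^ 3))
      = 4 * (∫ t in Ioo (-r^2) (0:ℝ), ∫ x in ball (0:V3) r,
            ‖v x t - ⨍ y in ball (0:V3) r, v y t‖ ^ 3)
        + 4 * θ ^ 3 * ∫ t in Ioo (-r^2) (0:ℝ), ∫ x in ball (0:V3) r, ‖v x t‖ ^ 3 := by
    rw [integral_add (hX.const_mul 4) (hY.const_mul (4 * θ ^ 3)), integral_const_mul,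
      integral_const_mul]
  set X := ∫ t in Ioo (-r^2) (0:ℝ), ∫ x in ball (0:V3) r,
    ‖v x t - ⨍ y in ball (0:V3) r, v y t‖ ^ 3 with hXdef
  set Y := ∫ t in Ioo (-r^2) (0:ℝ), ∫ x in ball (0:V3) r, ‖v x t‖ ^ 3 with hYdef
  have hpos : (0:ℝ) < (θ*r) ^ (-2:ℝ) := Real.rpow_pos_of_pos hθr _
  have final : funC v (θ*r) ≤ (θ*r) ^ (-2:ℝ) * (4 * X + 4 * θ ^ 3 * Y) := by
    rw [funC]
    exact mul_le_mul_of_nonneg_left (key.trans_eq hsplit) hpos.le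
  refine final.trans_eq ?_
  have h5 : θ ^ (-2:ℝ) * θ ^ (3:ℕ) = θ := by
    rw [← Real.rpow_natCast θ 3, ← Real.rpow_add hθ]; norm_num
  rw [funC, funCt, Real.mul_rpow hθ.le hr.le, ← hXdef, ← hYdef]
  calc θ ^ (-2:ℝ) * r ^ (-2:ℝ) * (4 * X + 4 * θ ^ 3 * Y)
      = 4 * (θ ^ (-2:ℝ) * θ ^ (3:ℕ) * (r ^ (-2:ℝ) * Y) + θ ^ (-2:ℝ) * (r ^ (-2:ℝ) * X)) := by
        ring
    _ = 4 * (θ * (r ^ (-2:ℝ) * Y) + θ ^ (-2:ℝ) * (r ^ (-2:ℝ) * X)) := by rw [h5]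


end
end

section
/- There exists an absolute constant c > 0 such that for every measurable vector field v : Q(1) → ℝ³ with v ∈ L³(Q(1)) ∩ L^∞(−1,0; L²(B(1))), every 0 < r ≤ 1 and every 0 < θ ≤ 1, one has C(θr) ≤ c ( θ³ A(r)^{3/2} + θ^{−2} C̃(r) ). -/
/- Setting: suitable weak solutions of the 3D incompressible Navier–Stokes equations,
   following Caffarelli–Kohn–Nirenberg.  The velocity field is `v`, its weak spatial
   gradient is `dv`, the pressure is `p` and the force is `f`. -/

open MeasureTheory Filter Metric Set Bornology
open scoped Topology ENNReal

noncomputable section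

def cB : ℝ := (volume (ball (0 : V3) 1)).toReal

lemma cB_pos : 0 < cB :=
  ENNReal.toReal_pos (measure_ball_pos _ _ one_pos).ne' (measure_ball_lt_top).ne

lemma volR_ball (r : ℝ) (hr : 0 ≤ r) : (volume (ball (0 : V3) r)).toReal = cB * r ^ 3 := by
  rw [Measure.addHaar_ball _ _ hr]
  rw [ENNReal.toReal_mul, ENNReal.toReal_ofReal (by positivity)]
  simp [cB, finrank_euclideanSpace_fin, mul_comm]

lemma cube_ineq {a b : ℝ} (ha : 0 ≤ a) (hb : 0 ≤ b) : (a + b) ^ 3 ≤ 4 * a ^ 3 + 4 * b ^ 3 := by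
  nlinarith [sq_nonneg (a - b), sq_nonneg (a + b), mul_nonneg ha hb]

set_option maxHeartbeats 2000000 in
/-- interpolation for C with kinetic energy. -/
theorem statement13 :
    ∃ c : ℝ, 0 < c ∧
      ∀ v : V3 → ℝ → V3,
        AEMeasurable (fun z : V3 × ℝ => v z.1 z.2)
          (volume.restrict (ball (0 : V3) 1 ×ˢ Ioo (-1 : ℝ) 0)) →
        IntegrableOn (fun z : V3 × ℝ => ‖v z.1 z.2‖ ^ 3)
          (ball (0 : V3) 1 ×ˢ Ioo (-1 : ℝ) 0) volume →
        (∃ K : ℝ, ∀ s ∈ Ioo (-1 : ℝ) 0,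
          IntegrableOn (fun x => ‖v x s‖ ^ 2) (ball (0 : V3) 1) volume ∧
          (∫ x in ball (0 : V3) 1, ‖v x s‖ ^ 2) ≤ K) →
        ∀ r θ : ℝ, 0 < r → r ≤ 1 → 0 < θ → θ ≤ 1 →
          funC v (θ*r)
            ≤ c * (θ ^ 3 * funA v r ^ ((3:ℝ)/2) + θ ^ (-2 : ℝ) * funCt v r) := by
  refine ⟨4 + 4 / Real.sqrt cB, by positivity, ?_⟩
  rintro v hmeas hint3 ⟨K, hK⟩ r θ hr hr1 hθ hθ1
  have hcB := cB_pos
  set ρ := θ * r with hρdef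
  have hρ : 0 < ρ := mul_pos hθ hr
  have hρr : ρ ≤ r := by nlinarith
  have hρ1 : ρ ≤ 1 := le_trans hρr hr1
  have hsubB : ball (0 : V3) r ⊆ ball (0 : V3) 1 := ball_subset_ball hr1
  have hsubBρ : ball (0 : V3) ρ ⊆ ball (0 : V3) r := ball_subset_ball hρr
  have hsubI : Ioo (-r ^ 2) (0:ℝ) ⊆ Ioo (-1 : ℝ) 0 := by
    apply Ioo_subset_Ioo _ le_rfl; nlinarith
  have hsubIρ : Ioo (-ρ ^ 2) (0:ℝ) ⊆ Ioo (-r ^ 2) 0 := by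
    apply Ioo_subset_Ioo _ le_rfl; nlinarith
  set A := funA v r with hAdef
  set m : ℝ → V3 := fun t => ⨍ y in ball (0 : V3) r, v y t with hmdef
  -- A-bound
  have hbdd : BddAbove ((fun s => ∫ x in ball (0 : V3) r, ‖v x s‖ ^ 2) '' Ioo (-r ^ 2) 0) := by
    refine ⟨K, ?_⟩
    rintro y ⟨s, hs, rfl⟩
    have hKs := hK s (hsubI hs)
    refine le_trans ?_ hKs.2
    exact setIntegral_mono_set hKs.1 (Eventually.of_forall fun x => by positivity)
      hsubB.eventuallyLE
  have hmemS : ∀ t ∈ Ioo (-r ^ 2) (0:ℝ), (∫ x in ball (0 : V3) r, ‖v x t‖ ^ 2)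
      ≤ sSup ((fun s => ∫ x in ball (0 : V3) r, ‖v x s‖ ^ 2) '' Ioo (-r ^ 2) 0) :=
    fun t ht => le_csSup hbdd ⟨t, ht, rfl⟩
  have hA2 : ∀ t ∈ Ioo (-r ^ 2) (0:ℝ), (∫ x in ball (0 : V3) r, ‖v x t‖ ^ 2) ≤ r * A := by
    intro t ht
    have : r * A = sSup ((fun s => ∫ x in ball (0 : V3) r, ‖v x s‖ ^ 2) '' Ioo (-r ^ 2) 0) := by
      rw [hAdef]; unfold funA; field_simp
    rw [this]; exact hmemS t ht
  have hA0 : 0 ≤ A := by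
    have ht0 : (-r ^ 2 / 2) ∈ Ioo (-r ^ 2) (0:ℝ) := by constructor <;> nlinarith
    have h0 : (0:ℝ) ≤ ∫ x in ball (0 : V3) r, ‖v x (-r ^ 2 / 2)‖ ^ 2 :=
      integral_nonneg fun x => by positivity
    have := le_trans h0 (hmemS _ ht0)
    rw [hAdef]; unfold funA; positivity
  set M : ℝ := Real.sqrt A / (Real.sqrt cB * r) with hMdef
  have hM0 : 0 ≤ M := by positivity
  -- average bound
  have hM : ∀ t ∈ Ioo (-r ^ 2) (0:ℝ), ‖m t‖ ≤ M := by
    intro t ht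
    have hvol : (volume (ball (0 : V3) r)).toReal = cB * r ^ 3 := volR_ball r hr.le
    by_cases hi : Integrable (fun y => v y t) (volume.restrict (ball (0 : V3) r))
    · haveI : IsFiniteMeasure (volume.restrict (ball (0 : V3) r)) :=
        ⟨by rw [Measure.restrict_apply_univ]; exact measure_ball_lt_top⟩
      have hf2 : Integrable (fun x => ‖v x t‖ ^ 2) (volume.restrict (ball (0 : V3) r)) :=
        (hK t (hsubI ht)).1.mono_set hsubB
      have hfmem : MemLp (fun x => ‖v x t‖) 2 (volume.restrict (ball (0 : V3) r)) :=
        (memLp_two_iff_integrable_sq hi.aestronglyMeasurable.norm).2 hf2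
      have hconj : Real.HolderConjugate 2 2 := Real.HolderConjugate.two_two
      have holder := integral_mul_le_Lp_mul_Lq_of_nonneg (μ := volume.restrict (ball (0 : V3) r))
        hconj (f := fun x => ‖v x t‖) (g := fun _ => (1:ℝ))
        (Eventually.of_forall fun x => norm_nonneg _) (Eventually.of_forall fun x => zero_le_one)
        (by simpa using hfmem) (by simpa using memLp_const (1:ℝ))
      simp only [mul_one] at holder
      have hs1 : (∫ x in ball (0 : V3) r, ‖v x t‖ ^ (2:ℝ)) = ∫ x in ball (0 : V3) r, ‖v x t‖ ^ 2 := by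
        refine integral_congr_ae (Eventually.of_forall fun x => ?_)
        simp [Real.rpow_two]
      have hs2 : (∫ _x in ball (0 : V3) r, ((1:ℝ) ^ (2:ℝ))) = cB * r ^ 3 := by
        rw [Real.one_rpow, setIntegral_const, smul_eq_mul, mul_one, measureReal_def, hvol]
      rw [hs1, hs2] at holder
      have hnorm : ‖m t‖ ≤ (cB * r ^ 3)⁻¹ * ∫ x in ball (0 : V3) r, ‖v x t‖ := by
        rw [hmdef]
        simp only [setAverage_eq, measureReal_def, hvol]
        rw [norm_smul, norm_inv, Real.norm_of_nonneg (by positivity)]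
        gcongr
        exact norm_integral_le_integral_norm _
      have hstep : (∫ x in ball (0 : V3) r, ‖v x t‖)
          ≤ (r * A) ^ ((1:ℝ)/2) * (cB * r ^ 3) ^ ((1:ℝ)/2) := by
        refine holder.trans (mul_le_mul_of_nonneg_right ?_ (by positivity))
        exact Real.rpow_le_rpow (integral_nonneg fun x => by positivity) (hA2 t ht) (by norm_num)
      have heq : (cB * r ^ 3)⁻¹ * ((r * A) ^ ((1:ℝ)/2) * (cB * r ^ 3) ^ ((1:ℝ)/2)) = M := by
        rw [← Real.mul_rpow (by positivity) (by positivity),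
          show r * A * (cB * r ^ 3) = A * (cB * r ^ 4) by ring,
          Real.mul_rpow hA0 (by positivity), ← Real.sqrt_eq_rpow, ← Real.sqrt_eq_rpow,
          show cB * r ^ 4 = cB * (r ^ 2) ^ 2 by ring, Real.sqrt_mul hcB.le,
          Real.sqrt_sq (by positivity), hMdef]
        have h1 : Real.sqrt cB ≠ 0 := by positivity
        have h2 : Real.sqrt cB * Real.sqrt cB = cB := Real.mul_self_sqrt hcB.le
        field_simp
        linear_combination (Real.sqrt A) * h2
      calc ‖m t‖ ≤ (cB * r ^ 3)⁻¹ * ∫ x in ball (0 : V3) r, ‖v x t‖ := hnorm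
        _ ≤ (cB * r ^ 3)⁻¹ * ((r * A) ^ ((1:ℝ)/2) * (cB * r ^ 3) ^ ((1:ℝ)/2)) :=
            mul_le_mul_of_nonneg_left hstep (by positivity)
        _ = M := heq
    · rw [hmdef]
      simp only [setAverage_eq, integral_undef hi, smul_zero, norm_zero]
      exact hM0
  -- measurability of slices, a.e. t
  have hmeas' : AEStronglyMeasurable (fun z : V3 × ℝ => v z.1 z.2)
      ((volume.restrict (ball (0 : V3) 1)).prod (volume.restrict (Ioo (-1 : ℝ) 0))) := by
    rw [Measure.prod_restrict]; exact hmeas.aestronglyMeasurable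
  have hmeas_swap : AEStronglyMeasurable (fun z : ℝ × V3 => v z.2 z.1)
      ((volume.restrict (Ioo (-1 : ℝ) 0)).prod (volume.restrict (ball (0 : V3) 1))) :=
    hmeas'.prod_swap
  have hslice_meas : ∀ᵐ t ∂(volume.restrict (Ioo (-1 : ℝ) 0)),
      AEStronglyMeasurable (fun x => v x t) (volume.restrict (ball (0 : V3) 1)) :=
    hmeas_swap.prodMk_left
  -- integrability of cube slices
  have hint3' : Integrable (fun z : V3 × ℝ => ‖v z.1 z.2‖ ^ 3)
      ((volume.restrict (ball (0 : V3) 1)).prod (volume.restrict (Ioo (-1 : ℝ) 0))) := by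
    rw [Measure.prod_restrict]; exact hint3
  have hslice_int : ∀ᵐ t ∂(volume.restrict (Ioo (-1 : ℝ) 0)),
      IntegrableOn (fun x => ‖v x t‖ ^ 3) (ball (0 : V3) 1) volume :=
    hint3'.prod_left_ae
  -- m is a.e.-measurable
  have hm_meas : AEStronglyMeasurable m (volume.restrict (Ioo (-1 : ℝ) 0)) := by
    have hms : AEStronglyMeasurable (fun z : ℝ × V3 => v z.2 z.1)
        ((volume.restrict (Ioo (-1 : ℝ) 0)).prod (volume.restrict (ball (0 : V3) r))) := by
      rw [Measure.prod_restrict] at hmeas_swap ⊢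
      exact hmeas_swap.mono_measure
        (Measure.restrict_mono (prod_mono Subset.rfl hsubB) le_rfl)
    have hint := hms.integral_prod_right'
    have hme : m = fun t => (volume (ball (0 : V3) r)).toReal⁻¹ •
        ∫ x in ball (0 : V3) r, v x t := by
      funext t
      show (⨍ y in ball (0 : V3) r, v y t) = _
      rw [setAverage_eq]
      rfl
    rw [hme]
    exact hint.const_smul ((volume (ball (0 : V3) r)).toReal⁻¹)
  -- joint integrability of the fluctuation
  have hmem_sub : ball (0 : V3) r ×ˢ Ioo (-r ^ 2) (0:ℝ) ⊆ ball (0 : V3) 1 ×ˢ Ioo (-1 : ℝ) 0 :=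
    prod_mono hsubB hsubI
  haveI hfinQ : IsFiniteMeasure (volume.restrict (ball (0 : V3) r ×ˢ Ioo (-r ^ 2) (0:ℝ))) :=
    ⟨by
      rw [Measure.restrict_apply_univ, Measure.volume_eq_prod, Measure.prod_prod]
      exact ENNReal.mul_lt_top measure_ball_lt_top measure_Ioo_lt_top⟩
  have hflux_meas : AEStronglyMeasurable (fun z : V3 × ℝ => ‖v z.1 z.2 - m z.2‖ ^ 3)
      (volume.restrict (ball (0 : V3) r ×ˢ Ioo (-r ^ 2) (0:ℝ))) := by
    have hv : AEStronglyMeasurable (fun z : V3 × ℝ => v z.1 z.2)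
        (volume.restrict (ball (0 : V3) r ×ˢ Ioo (-r ^ 2) (0:ℝ))) :=
      hmeas.aestronglyMeasurable.mono_measure (Measure.restrict_mono hmem_sub le_rfl)
    have hm2 : AEStronglyMeasurable (fun z : V3 × ℝ => m z.2)
        (volume.restrict (ball (0 : V3) r ×ˢ Ioo (-r ^ 2) (0:ℝ))) := by
      rw [Measure.volume_eq_prod, ← Measure.prod_restrict]
      exact (hm_meas.mono_measure
        (Measure.restrict_mono hsubI le_rfl)).comp_quasiMeasurePreserving
        Measure.quasiMeasurePreserving_snd
    exact ((hv.sub hm2).norm).pow 3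
  have hflux : IntegrableOn (fun z : V3 × ℝ => ‖v z.1 z.2 - m z.2‖ ^ 3)
      (ball (0 : V3) r ×ˢ Ioo (-r ^ 2) 0) volume := by
    have hdom : Integrable
        (fun z : V3 × ℝ => 4 * ‖v z.1 z.2‖ ^ 3 + 4 * M ^ 3)
        (volume.restrict (ball (0 : V3) r ×ˢ Ioo (-r ^ 2) (0:ℝ))) :=
      ((hint3.mono_set hmem_sub).const_mul 4).add (integrable_const _)
    refine hdom.mono hflux_meas ?_
    filter_upwards [ae_restrict_mem (measurableSet_ball.prod measurableSet_Ioo)] with z hz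
    have hMz := hM z.2 hz.2
    rw [Real.norm_eq_abs, abs_of_nonneg (by positivity)]
    refine le_trans ?_ (le_abs_self _)
    calc ‖v z.1 z.2 - m z.2‖ ^ 3 ≤ (‖v z.1 z.2‖ + ‖m z.2‖) ^ 3 :=
          pow_le_pow_left₀ (norm_nonneg _) (norm_sub_le _ _) 3
      _ ≤ 4 * ‖v z.1 z.2‖ ^ 3 + 4 * ‖m z.2‖ ^ 3 := cube_ineq (norm_nonneg _) (norm_nonneg _)
      _ ≤ 4 * ‖v z.1 z.2‖ ^ 3 + 4 * M ^ 3 := by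
          have : ‖m z.2‖ ^ 3 ≤ M ^ 3 := pow_le_pow_left₀ (norm_nonneg _) hMz 3
          linarith
  have hflux' : Integrable (fun z : V3 × ℝ => ‖v z.1 z.2 - m z.2‖ ^ 3)
      ((volume.restrict (ball (0 : V3) r)).prod (volume.restrict (Ioo (-r ^ 2) 0))) := by
    rw [Measure.prod_restrict]
    rw [IntegrableOn, Measure.volume_eq_prod] at hflux
    exact hflux
  -- Fubini integrabilities
  have h1 : Integrable (fun t => ∫ x in ball (0 : V3) ρ, ‖v x t‖ ^ 3)
      (volume.restrict (Ioo (-ρ ^ 2) (0:ℝ))) := by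
    have h := hint3.mono_set (prod_mono (hsubBρ.trans hsubB) (hsubIρ.trans hsubI))
    rw [IntegrableOn, Measure.volume_eq_prod, ← Measure.prod_restrict] at h
    exact h.integral_prod_right
  have h2 : Integrable (fun t => ∫ x in ball (0 : V3) r, ‖v x t - m t‖ ^ 3)
      (volume.restrict (Ioo (-r ^ 2) (0:ℝ))) :=
    hflux'.integral_prod_right
  have h2nonneg : ∀ t, 0 ≤ ∫ x in ball (0 : V3) r, ‖v x t - m t‖ ^ 3 := fun t =>
    integral_nonneg fun x => by positivity
  -- key slicewise inequality
  have key : ∀ᵐ t ∂(volume.restrict (Ioo (-ρ ^ 2) (0:ℝ))),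
      (∫ x in ball (0 : V3) ρ, ‖v x t‖ ^ 3)
        ≤ 4 * (∫ x in ball (0 : V3) r, ‖v x t - m t‖ ^ 3) + 4 * (cB * ρ ^ 3) * M ^ 3 := by
    haveI : IsFiniteMeasure (volume.restrict (ball (0 : V3) 1)) :=
      ⟨by rw [Measure.restrict_apply_univ]; exact measure_ball_lt_top⟩
    haveI : IsFiniteMeasure (volume.restrict (ball (0 : V3) ρ)) :=
      ⟨by rw [Measure.restrict_apply_univ]; exact measure_ball_lt_top⟩
    have hmono := ae_mono (μ := volume.restrict (Ioo (-ρ ^ 2) (0:ℝ)))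
      (Measure.restrict_mono (hsubIρ.trans hsubI) le_rfl)
    filter_upwards [ae_restrict_mem measurableSet_Ioo, hmono hslice_meas, hmono hslice_int]
      with t ht hsm hsi
    have htr : t ∈ Ioo (-r ^ 2) (0:ℝ) := hsubIρ ht
    have hMt := hM t htr
    have hpt : ∀ x : V3, ‖v x t‖ ^ 3 ≤ 4 * ‖v x t - m t‖ ^ 3 + 4 * M ^ 3 := by
      intro x
      calc ‖v x t‖ ^ 3 = ‖(v x t - m t) + m t‖ ^ 3 := by rw [sub_add_cancel]
        _ ≤ (‖v x t - m t‖ + ‖m t‖) ^ 3 :=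
            pow_le_pow_left₀ (norm_nonneg _) (norm_add_le _ _) 3
        _ ≤ 4 * ‖v x t - m t‖ ^ 3 + 4 * ‖m t‖ ^ 3 := cube_ineq (norm_nonneg _) (norm_nonneg _)
        _ ≤ 4 * ‖v x t - m t‖ ^ 3 + 4 * M ^ 3 := by
            have : ‖m t‖ ^ 3 ≤ M ^ 3 := pow_le_pow_left₀ (norm_nonneg _) hMt 3
            linarith
    have hfl_slice : IntegrableOn (fun x => ‖v x t - m t‖ ^ 3) (ball (0 : V3) 1) volume := by
      have hdom : Integrable (fun x => 4 * ‖v x t‖ ^ 3 + 4 * M ^ 3)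
          (volume.restrict (ball (0 : V3) 1)) :=
        (hsi.const_mul 4).add (integrable_const _)
      refine hdom.mono (((hsm.sub aestronglyMeasurable_const).norm).pow 3) ?_
      refine Eventually.of_forall fun x => ?_
      rw [Real.norm_eq_abs, abs_of_nonneg (by positivity)]
      refine le_trans ?_ (le_abs_self _)
      calc ‖v x t - m t‖ ^ 3 ≤ (‖v x t‖ + ‖m t‖) ^ 3 :=
            pow_le_pow_left₀ (norm_nonneg _) (norm_sub_le _ _) 3
        _ ≤ 4 * ‖v x t‖ ^ 3 + 4 * ‖m t‖ ^ 3 := cube_ineq (norm_nonneg _) (norm_nonneg _)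
        _ ≤ 4 * ‖v x t‖ ^ 3 + 4 * M ^ 3 := by
            have : ‖m t‖ ^ 3 ≤ M ^ 3 := pow_le_pow_left₀ (norm_nonneg _) hMt 3
            linarith
    have hBρ1 : ball (0 : V3) ρ ⊆ ball (0 : V3) 1 := hsubBρ.trans hsubB
    calc (∫ x in ball (0 : V3) ρ, ‖v x t‖ ^ 3)
        ≤ ∫ x in ball (0 : V3) ρ, (4 * ‖v x t - m t‖ ^ 3 + 4 * M ^ 3) := by
          refine integral_mono (hsi.mono_set hBρ1)
            (((hfl_slice.const_mul 4).add (integrable_const _)).mono_measure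
              (Measure.restrict_mono hBρ1 le_rfl)) fun x => hpt x
      _ = 4 * (∫ x in ball (0 : V3) ρ, ‖v x t - m t‖ ^ 3)
            + (volume (ball (0 : V3) ρ)).toReal * (4 * M ^ 3) := by
          rw [integral_add ((hfl_slice.mono_set hBρ1).const_mul 4) (integrable_const _),
            integral_const_mul, setIntegral_const, smul_eq_mul, measureReal_def]
      _ ≤ 4 * (∫ x in ball (0 : V3) r, ‖v x t - m t‖ ^ 3)
            + (volume (ball (0 : V3) ρ)).toReal * (4 * M ^ 3) := by
          have hX := setIntegral_mono_set (hfl_slice.mono_set hsubB)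
            (Eventually.of_forall fun x => by positivity) hsubBρ.eventuallyLE
          linarith
      _ = 4 * (∫ x in ball (0 : V3) r, ‖v x t - m t‖ ^ 3) + 4 * (cB * ρ ^ 3) * M ^ 3 := by
          rw [volR_ball ρ hρ.le]; ring
  -- integrate in time
  have hRHSint : Integrable
      (fun t => 4 * (∫ x in ball (0 : V3) r, ‖v x t - m t‖ ^ 3) + 4 * (cB * ρ ^ 3) * M ^ 3)
      (volume.restrict (Ioo (-ρ ^ 2) (0:ℝ))) := by
    haveI : IsFiniteMeasure (volume.restrict (Ioo (-ρ ^ 2) (0:ℝ))) :=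
      ⟨by rw [Measure.restrict_apply_univ]; exact measure_Ioo_lt_top⟩
    exact ((h2.mono_measure (Measure.restrict_mono hsubIρ le_rfl)).const_mul 4).add
      (integrable_const _)
  have step1 : (∫ t in Ioo (-ρ ^ 2) (0:ℝ), ∫ x in ball (0 : V3) ρ, ‖v x t‖ ^ 3)
      ≤ 4 * (∫ t in Ioo (-r ^ 2) (0:ℝ), ∫ x in ball (0 : V3) r, ‖v x t - m t‖ ^ 3)
        + 4 * cB * ρ ^ 5 * M ^ 3 := by
    have hmain := integral_mono_ae h1 hRHSint key
    have hsplit : (∫ t in Ioo (-ρ ^ 2) (0:ℝ),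
        (4 * (∫ x in ball (0 : V3) r, ‖v x t - m t‖ ^ 3) + 4 * (cB * ρ ^ 3) * M ^ 3))
        = 4 * (∫ t in Ioo (-ρ ^ 2) (0:ℝ), ∫ x in ball (0 : V3) r, ‖v x t - m t‖ ^ 3)
          + ρ ^ 2 * (4 * (cB * ρ ^ 3) * M ^ 3) := by
      rw [integral_add ((h2.mono_measure (Measure.restrict_mono hsubIρ le_rfl)).const_mul 4)
        (integrable_const _), integral_const_mul, setIntegral_const, smul_eq_mul,
        measureReal_def, Real.volume_Ioo]
      norm_num [ENNReal.toReal_ofReal (by positivity : (0:ℝ) ≤ ρ ^ 2)]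
    have htime : (∫ t in Ioo (-ρ ^ 2) (0:ℝ), ∫ x in ball (0 : V3) r, ‖v x t - m t‖ ^ 3)
        ≤ ∫ t in Ioo (-r ^ 2) (0:ℝ), ∫ x in ball (0 : V3) r, ‖v x t - m t‖ ^ 3 :=
      setIntegral_mono_set h2 (Eventually.of_forall fun t => h2nonneg t)
        hsubIρ.eventuallyLE
    rw [hsplit] at hmain
    calc (∫ t in Ioo (-ρ ^ 2) (0:ℝ), ∫ x in ball (0 : V3) ρ, ‖v x t‖ ^ 3)
        ≤ 4 * (∫ t in Ioo (-ρ ^ 2) (0:ℝ), ∫ x in ball (0 : V3) r, ‖v x t - m t‖ ^ 3)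
          + ρ ^ 2 * (4 * (cB * ρ ^ 3) * M ^ 3) := hmain
      _ ≤ 4 * (∫ t in Ioo (-r ^ 2) (0:ℝ), ∫ x in ball (0 : V3) r, ‖v x t - m t‖ ^ 3)
          + ρ ^ 2 * (4 * (cB * ρ ^ 3) * M ^ 3) := by linarith
      _ = 4 * (∫ t in Ioo (-r ^ 2) (0:ℝ), ∫ x in ball (0 : V3) r, ‖v x t - m t‖ ^ 3)
          + 4 * cB * ρ ^ 5 * M ^ 3 := by ring
  -- final arithmetic
  have hH0 : 0 ≤ ∫ t in Ioo (-r ^ 2) (0:ℝ), ∫ x in ball (0 : V3) r, ‖v x t - m t‖ ^ 3 :=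
    integral_nonneg h2nonneg
  have hrpow : ∀ x : ℝ, 0 < x → x ^ (-2:ℝ) = (x ^ 2)⁻¹ := fun x hx => by
    rw [Real.rpow_neg hx.le, Real.rpow_two]
  have hA32 : A ^ ((3:ℝ)/2) = Real.sqrt A ^ 3 := by
    rw [show (3:ℝ)/2 = (1/(2:ℝ)) * ((3:ℕ):ℝ) by norm_num, Real.rpow_mul hA0,
      Real.rpow_natCast, ← Real.sqrt_eq_rpow]
  have hfunCt : funCt v r = r ^ (-2:ℝ) *
      ∫ t in Ioo (-r ^ 2) (0:ℝ), ∫ x in ball (0 : V3) r, ‖v x t - m t‖ ^ 3 := rfl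
  have hu : Real.sqrt cB ≠ 0 := by positivity
  have hu2 : Real.sqrt cB * Real.sqrt cB = cB := Real.mul_self_sqrt hcB.le
  have hsA : (0:ℝ) ≤ Real.sqrt A := Real.sqrt_nonneg _
  show ρ ^ (-2:ℝ) * (∫ t in Ioo (-ρ ^ 2) (0:ℝ), ∫ x in ball (0 : V3) ρ, ‖v x t‖ ^ 3)
    ≤ (4 + 4 / Real.sqrt cB) * (θ ^ 3 * A ^ ((3:ℝ)/2) + θ ^ (-2:ℝ) * funCt v r)
  have heq : ρ ^ (-2:ℝ) *
      (4 * (∫ t in Ioo (-r ^ 2) (0:ℝ), ∫ x in ball (0 : V3) r, ‖v x t - m t‖ ^ 3)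
        + 4 * cB * ρ ^ 5 * M ^ 3)
      = 4 * (θ ^ (-2:ℝ) * funCt v r) + (4 / Real.sqrt cB) * (θ ^ 3 * A ^ ((3:ℝ)/2)) := by
    rw [hfunCt, hA32, hrpow ρ hρ, hrpow r hr, hrpow θ hθ, hMdef, hρdef]
    field_simp
    ring_nf
    linear_combination (-r ^ 2 * θ ^ 5 * Real.sqrt A ^ 3) * hu2
  calc ρ ^ (-2:ℝ) * (∫ t in Ioo (-ρ ^ 2) (0:ℝ), ∫ x in ball (0 : V3) ρ, ‖v x t‖ ^ 3)
      ≤ ρ ^ (-2:ℝ) *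
        (4 * (∫ t in Ioo (-r ^ 2) (0:ℝ), ∫ x in ball (0 : V3) r, ‖v x t - m t‖ ^ 3)
          + 4 * cB * ρ ^ 5 * M ^ 3) :=
        mul_le_mul_of_nonneg_left step1 (Real.rpow_nonneg hρ.le _)
    _ = 4 * (θ ^ (-2:ℝ) * funCt v r) + (4 / Real.sqrt cB) * (θ ^ 3 * A ^ ((3:ℝ)/2)) := heq
    _ ≤ (4 + 4 / Real.sqrt cB) * (θ ^ 3 * A ^ ((3:ℝ)/2) + θ ^ (-2:ℝ) * funCt v r) := by
        have hX : 0 ≤ θ ^ 3 * A ^ ((3:ℝ)/2) := by positivity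
        have hY : 0 ≤ θ ^ (-2:ℝ) * funCt v r := by
          refine mul_nonneg (Real.rpow_nonneg hθ.le _) ?_
          rw [hfunCt]
          exact mul_nonneg (Real.rpow_nonneg hr.le _) hH0
        have hu0 : 0 < Real.sqrt cB := Real.sqrt_pos.2 hcB
        nlinarith [mul_nonneg (le_of_lt (div_pos (by norm_num : (0:ℝ) < 4) hu0)) hY,
          mul_nonneg (by norm_num : (0:ℝ) ≤ 4) hX]


end
end
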